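/- Let R be an integral domain, X an indeterminate over R, and * a star operation of finite character on R[X]. The following statements are equivalent: (a) for every upper to zero Q in R[X], c(Q)^{\bar{*}} = R; (b) for every upper to zero Q in R[X], there exists g ∈ Q with c(g)^{\bar{*}} = R; (c) Q ⊄ p[X] for each upper to zero Q in R[X] and each \bar{*}-prime ideal p of R; (d) Q ⊄ M[X] for each upper to zero Q in R[X] and each \bar{*}-maximal ideal M of R. -/

import Mathlib

/-!
Write `I^{\bar *}` also for the ideal `{r ∈ R | r ∈ (I[X])^*}`. On nonzero ideals this is a closure
operation which inherits finite character from `*`: if `r ∈ (⨆ Iᵢ)^{\bar *}` for a directed family,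
then already `r ∈ Iᵢ^{\bar *}` for some `i`. Since `c(f) + c(g) ⊆ c(f + X^{deg f + 1} g)`, the
content `c(Q)` is the directed union of the `c(g)` with `g ∈ Q`, which gives (a) ⇒ (b); and
(b) ⇒ (c) because `Q ⊆ p[X]` forces `c(g) ⊆ p`. A `\bar *`-maximal ideal `M` is prime: if `ab ∈ M`
and `a ∉ M`, then `(M + aR)^{\bar *} = R`, and `b(M + aR) ⊆ M` yields `b ∈ M^{\bar *} = M`. This
gives (c) ⇒ (d). Finally, by Zorn's lemma and finite character, the proper `\bar *`-ideal
`c(Q)^{\bar *}` of (d) ⇒ (a) lies in a `\bar *`-maximal ideal `M`, and then `Q ⊆ c(Q)[X] ⊆ M[X]`.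
-/

open Polynomial

/-- A *star operation* on a domain `S` with quotient field `M`: a map on the nonzero
fractional ideals of `S` satisfying `(aI)^* = aI^*`, `I ⊆ I^*`, monotonicity,
idempotency and `S^* = S`. -/
structure IsStarOperation (S M : Type*) [CommRing S] [IsDomain S] [Field M] [Algebra S M]
    [IsFractionRing S M]
    (star : FractionalIdeal (nonZeroDivisors S) M → FractionalIdeal (nonZeroDivisors S) M) :
    Prop where
  smul_eq : ∀ a : M, a ≠ 0 → ∀ I, I ≠ 0 →
    star (FractionalIdeal.spanSingleton (nonZeroDivisors S) a * I) =
      FractionalIdeal.spanSingleton (nonZeroDivisors S) a * star I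
  le_star : ∀ I, I ≠ 0 → I ≤ star I
  mono : ∀ I J, I ≠ 0 → J ≠ 0 → I ≤ J → star I ≤ star J
  idem : ∀ I, I ≠ 0 → star (star I) = star I
  star_one : star 1 = 1

/-- A star operation has *finite character* if
`I^* = ⋃ {J^* : J nonzero finitely generated fractional ideal, J ⊆ I}`. -/
def StarFiniteCharacter (S M : Type*) [CommRing S] [IsDomain S] [Field M] [Algebra S M]
    [IsFractionRing S M]
    (star : FractionalIdeal (nonZeroDivisors S) M → FractionalIdeal (nonZeroDivisors S) M) :
    Prop :=
  ∀ I, I ≠ 0 → ∀ x : M,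
    x ∈ star I ↔ ∃ J : FractionalIdeal (nonZeroDivisors S) M, J ≠ 0 ∧ (J : Submodule S M).FG ∧ J ≤ I ∧ x ∈ star J

/-- `Q` is a `*`-maximal ideal: a proper nonzero integral `*`-ideal which is maximal
among proper integral `*`-ideals. -/
def IsStarMaximal {S M : Type*} [CommRing S] [IsDomain S] [Field M] [Algebra S M]
    [IsFractionRing S M]
    (star : FractionalIdeal (nonZeroDivisors S) M → FractionalIdeal (nonZeroDivisors S) M)
    (Q : Ideal S) : Prop :=
  Q ≠ ⊥ ∧ Q ≠ ⊤ ∧ star ↑Q = (Q : FractionalIdeal (nonZeroDivisors S) M) ∧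
    ∀ J : Ideal S, J ≠ ⊥ → J ≠ ⊤ → star ↑J = (J : FractionalIdeal (nonZeroDivisors S) M) →
      Q ≤ J → Q = J

/-- An *upper to zero* in `R[X]`: a nonzero prime ideal `Q` with `Q ∩ R = (0)`. -/
def IsUpperToZero {R : Type*} [CommRing R] [IsDomain R] (Q : Ideal R[X]) : Prop :=
  Q.IsPrime ∧ Q ≠ ⊥ ∧ Q.comap (C : R →+* R[X]) = ⊥

/-- `c(Q)`: the content of an ideal `Q` of `R[X]`, the ideal of `R` generated by the
coefficients of all elements of `Q`. -/
def contentIdeal {R : Type*} [CommRing R] (Q : Ideal R[X]) : Ideal R :=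
  Ideal.span {a : R | ∃ f ∈ Q, ∃ n, f.coeff n = a}

/-- `c(f)`: the content of a polynomial, the ideal generated by its coefficients. -/
def coeffIdeal {R : Type*} [CommRing R] (f : R[X]) : Ideal R :=
  Ideal.span {a : R | ∃ n, f.coeff n = a}

variable {R K L : Type*} [CommRing R] [IsDomain R]
  [Field K] [Algebra R K] [IsFractionRing R K]
  [Field L] [Algebra R[X] L] [IsFractionRing R[X] L]

/-- `I^{\bar{*}} = (I[X])^* ∩ K` for an integral ideal `I` of `R`, as a subset of `K`;
here `ι : K →+* L = K(X)` is the canonical embedding. -/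
def barStarSet
    (star : FractionalIdeal (nonZeroDivisors R[X]) L → FractionalIdeal (nonZeroDivisors R[X]) L)
    (ι : K →+* L) (I : Ideal R) : Set K :=
  {x : K | ι x ∈ star ((I.map (C : R →+* R[X]) : Ideal R[X]) :
      FractionalIdeal (nonZeroDivisors R[X]) L)}

/-- `p` is a `\bar{*}`-prime ideal of `R`: a (nonzero) prime ideal which is a
`\bar{*}`-ideal, i.e. `p^{\bar{*}} = p`. -/
def IsBarStarPrime
    (star : FractionalIdeal (nonZeroDivisors R[X]) L → FractionalIdeal (nonZeroDivisors R[X]) L)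
    (ι : K →+* L) (p : Ideal R) : Prop :=
  p ≠ ⊥ ∧ p.IsPrime ∧ barStarSet star ι p = algebraMap R K '' (p : Set R)

/-- `M` is a `\bar{*}`-maximal ideal of `R`: a proper nonzero integral `\bar{*}`-ideal
maximal among proper integral `\bar{*}`-ideals. -/
def IsBarStarMaximal
    (star : FractionalIdeal (nonZeroDivisors R[X]) L → FractionalIdeal (nonZeroDivisors R[X]) L)
    (ι : K →+* L) (M : Ideal R) : Prop :=
  M ≠ ⊥ ∧ M ≠ ⊤ ∧ barStarSet star ι M = algebraMap R K '' (M : Set R) ∧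
    ∀ J : Ideal R, J ≠ ⊥ → J ≠ ⊤ → barStarSet star ι J = algebraMap R K '' (J : Set R) →
      M ≤ J → M = J

open scoped nonZeroDivisors

section StarOperation

variable {S M : Type*} [CommRing S] [IsDomain S] [Field M] [Algebra S M] [IsFractionRing S M]
  {star : FractionalIdeal S⁰ M → FractionalIdeal S⁰ M}

omit [IsDomain S] [IsFractionRing S M] in
theorem FractionalIdeal.coeIdeal_le_iff_le_comap {A : Ideal S} {F : FractionalIdeal S⁰ M} :
    (A : FractionalIdeal S⁰ M) ≤ F ↔ A ≤ (F : Submodule S M).comap (Algebra.linearMap S M) := by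
  rw [← FractionalIdeal.coe_le_coe, FractionalIdeal.coe_coeIdeal]
  exact Submodule.map_le_iff_le_comap

theorem IsStarOperation.star_ne_zero (hstar : IsStarOperation S M star)
    {I : FractionalIdeal S⁰ M} (hI : I ≠ 0) : star I ≠ 0 :=
  fun h => hI (FractionalIdeal.le_zero_iff.mp (h ▸ hstar.le_star I hI))

theorem IsStarOperation.star_coeIdeal_le_one (hstar : IsStarOperation S M star) {A : Ideal S}
    (hA : A ≠ ⊥) : star A ≤ 1 := by
  have h := hstar.mono A (⊤ : Ideal S) (FractionalIdeal.coeIdeal_ne_zero.mpr hA)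
    (FractionalIdeal.coeIdeal_ne_zero.mpr top_ne_bot)
    ((FractionalIdeal.coeIdeal_le_coeIdeal M).mpr le_top)
  rwa [FractionalIdeal.coeIdeal_top, hstar.star_one] at h

theorem IsStarOperation.exists_mem_star_of_mem_star_iSup (hstar : IsStarOperation S M star)
    (hfc : StarFiniteCharacter S M star) {ι : Type*} [Nonempty ι] {A : ι → Ideal S}
    (hA : Directed (· ≤ ·) A) (hA0 : ⨆ i, A i ≠ ⊥) {x : M}
    (hx : x ∈ star ↑(⨆ i, A i)) : ∃ i, A i ≠ ⊥ ∧ x ∈ star (A i) := by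
  obtain ⟨J, hJ0, hJfg, hJle, hxJ⟩ :=
    (hfc _ (FractionalIdeal.coeIdeal_ne_zero.mpr hA0) x).mp hx
  have hdir : Directed (· ≤ ·) fun i => ((A i : FractionalIdeal S⁰ M) : Submodule S M) :=
    Directed.mono_comp (g := fun I : Ideal S => ((I : FractionalIdeal S⁰ M) : Submodule S M))
      (· ≤ ·) (fun _ _ h => FractionalIdeal.coe_le_coe.mpr
        ((FractionalIdeal.coeIdeal_le_coeIdeal M).mpr h)) hA
  have hJsup : (J : Submodule S M) ≤ ⨆ i, ((A i : FractionalIdeal S⁰ M) : Submodule S M) := by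
    simpa only [FractionalIdeal.coe_coeIdeal, IsLocalization.coeSubmodule, Submodule.map_iSup]
      using FractionalIdeal.coe_le_coe.mpr hJle
  obtain ⟨_, ⟨i, rfl⟩, hJi⟩ := (CompleteLattice.isCompactElement_iff_le_of_directed_sSup_le _ _).mp
    ((Submodule.fg_iff_compact _).mp hJfg) _ (Set.range_nonempty _) hdir.directedOn_range hJsup
  have hJi : J ≤ A i := FractionalIdeal.coe_le_coe.mp hJi
  have hAi : (A i : FractionalIdeal S⁰ M) ≠ 0 :=
    fun h => hJ0 (FractionalIdeal.le_zero_iff.mp (h ▸ hJi))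
  exact ⟨i, FractionalIdeal.coeIdeal_ne_zero.mp hAi, hstar.mono _ _ hJ0 hAi hJi hxJ⟩

end StarOperation

section Content

variable {A : Type*} [CommRing A]

theorem coeffIdeal_eq_contentIdeal (g : A[X]) : coeffIdeal g = g.contentIdeal := by
  refine le_antisymm (Ideal.span_le.mpr ?_) (Ideal.span_le.mpr fun c hc => ?_)
  · rintro _ ⟨n, rfl⟩
    exact g.coeff_mem_contentIdeal n
  · obtain ⟨n, -, rfl⟩ := mem_coeffs_iff.mp hc
    exact Ideal.subset_span ⟨n, rfl⟩

theorem coeffIdeal_eq_bot_iff {g : A[X]} : coeffIdeal g = ⊥ ↔ g = 0 := by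
  rw [coeffIdeal_eq_contentIdeal, contentIdeal_eq_bot_iff]

theorem coeffIdeal_ne_bot {g : A[X]} (hg : g ≠ 0) : coeffIdeal g ≠ ⊥ :=
  coeffIdeal_eq_bot_iff.not.mpr hg

theorem coeffIdeal_le_iff {g : A[X]} {I : Ideal A} : coeffIdeal g ≤ I ↔ g ∈ I.map C := by
  rw [coeffIdeal, Ideal.span_le, Ideal.mem_map_C_iff]
  exact ⟨fun h n => h ⟨n, rfl⟩, fun h _ ⟨n, hn⟩ => hn ▸ h n⟩

theorem coeff_mem_coeffIdeal (g : A[X]) (n : ℕ) : g.coeff n ∈ coeffIdeal g :=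
  Ideal.subset_span ⟨n, rfl⟩

theorem coeffIdeal_le_coeffIdeal_add_X_pow_mul (f g : A[X]) :
    coeffIdeal f ≤ coeffIdeal (f + X ^ (f.natDegree + 1) * g) ∧
      coeffIdeal g ≤ coeffIdeal (f + X ^ (f.natDegree + 1) * g) := by
  constructor <;> refine Ideal.span_le.mpr ?_ <;> rintro _ ⟨n, rfl⟩ <;> rw [SetLike.mem_coe]
  · by_cases hn : n ≤ f.natDegree
    · convert coeff_mem_coeffIdeal (f + X ^ (f.natDegree + 1) * g) n using 1
      rw [coeff_add, coeff_X_pow_mul', if_neg (by omega), add_zero]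
    · rw [coeff_eq_zero_of_natDegree_lt (not_le.mp hn)]
      exact zero_mem _
  · convert coeff_mem_coeffIdeal (f + X ^ (f.natDegree + 1) * g) (n + (f.natDegree + 1)) using 1
    rw [coeff_add, coeff_X_pow_mul, coeff_eq_zero_of_natDegree_lt (p := f) (by omega), zero_add]

theorem directed_coeffIdeal (Q : Ideal A[X]) :
    Directed (· ≤ ·) fun g : Q => coeffIdeal (g : A[X]) :=
  fun ⟨f, hf⟩ ⟨g, hg⟩ => ⟨⟨f + X ^ (f.natDegree + 1) * g, Q.add_mem hf (Q.mul_mem_left _ hg)⟩,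
    coeffIdeal_le_coeffIdeal_add_X_pow_mul f g⟩

theorem contentIdeal_eq_iSup_coeffIdeal (Q : Ideal A[X]) :
    contentIdeal Q = ⨆ g : Q, coeffIdeal (g : A[X]) := by
  simp only [_root_.contentIdeal, coeffIdeal, ← Ideal.span_iUnion]
  congr 1
  ext a
  simp

theorem coeffIdeal_le_contentIdeal {Q : Ideal A[X]} {g : A[X]} (hg : g ∈ Q) :
    coeffIdeal g ≤ contentIdeal Q :=
  (contentIdeal_eq_iSup_coeffIdeal Q).symm ▸ le_iSup (fun g : Q => coeffIdeal (g : A[X])) ⟨g, hg⟩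

theorem le_map_C_contentIdeal (Q : Ideal A[X]) : Q ≤ (contentIdeal Q).map C :=
  fun _ hg => coeffIdeal_le_iff.mp (coeffIdeal_le_contentIdeal hg)

theorem contentIdeal_ne_bot {Q : Ideal A[X]} (hQ : Q ≠ ⊥) : contentIdeal Q ≠ ⊥ := by
  obtain ⟨g, hgQ, hg0⟩ := Submodule.exists_mem_ne_zero_of_ne_bot hQ
  exact ne_bot_of_le_ne_bot (coeffIdeal_ne_bot hg0) (coeffIdeal_le_contentIdeal hgQ)

end Content

section BarStar

/-- `I^{\bar{*}} ∩ R`, as an ideal of `R`. -/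
noncomputable def barStar (star : FractionalIdeal R[X]⁰ L → FractionalIdeal R[X]⁰ L)
    (I : Ideal R) : Ideal R :=
  Ideal.comap C ((star ((I.map C : Ideal R[X]) : FractionalIdeal R[X]⁰ L) : Submodule R[X] L).comap
    (Algebra.linearMap R[X] L))

variable {star : FractionalIdeal R[X]⁰ L → FractionalIdeal R[X]⁰ L} {I J : Ideal R}

omit [IsDomain R] [IsFractionRing R[X] L] in
theorem mem_barStar {r : R} :
    r ∈ barStar star I ↔ algebraMap R[X] L (C r) ∈ star ↑(I.map C) :=
  Iff.rfl

omit [IsDomain R] in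
theorem map_C_ne_bot (hI : I ≠ ⊥) : I.map (C : R →+* R[X]) ≠ ⊥ :=
  (Ideal.map_eq_bot_iff_of_injective C_injective).not.mpr hI

omit [IsDomain R] in
theorem coeIdeal_map_C_ne_zero (hI : I ≠ ⊥) :
    ((I.map C : Ideal R[X]) : FractionalIdeal R[X]⁰ L) ≠ 0 :=
  FractionalIdeal.coeIdeal_ne_zero.mpr (map_C_ne_bot hI)

theorem le_barStar (hstar : IsStarOperation R[X] L star) (hI : I ≠ ⊥) : I ≤ barStar star I :=
  fun r hr => hstar.le_star _ (coeIdeal_map_C_ne_zero hI)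
    ((FractionalIdeal.mem_coeIdeal _).mpr ⟨C r, Ideal.mem_map_of_mem C hr, rfl⟩)

theorem barStar_mono (hstar : IsStarOperation R[X] L star) (hI : I ≠ ⊥) (hIJ : I ≤ J) :
    barStar star I ≤ barStar star J :=
  fun _ hr => hstar.mono _ _ (coeIdeal_map_C_ne_zero hI)
    (coeIdeal_map_C_ne_zero (ne_bot_of_le_ne_bot hI hIJ))
    ((FractionalIdeal.coeIdeal_le_coeIdeal L).mpr (Ideal.map_mono hIJ)) hr

theorem barStar_barStar (hstar : IsStarOperation R[X] L star) (hI : I ≠ ⊥) :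
    barStar star (barStar star I) = barStar star I := by
  have hI' := ne_bot_of_le_ne_bot hI (le_barStar hstar hI)
  refine le_antisymm (fun r hr => ?_) (le_barStar hstar hI')
  have hle : (((barStar star I).map C : Ideal R[X]) : FractionalIdeal R[X]⁰ L) ≤ star ↑(I.map C) :=
    FractionalIdeal.coeIdeal_le_iff_le_comap.mpr Ideal.map_comap_le
  have h := hstar.mono _ _ (coeIdeal_map_C_ne_zero hI')
    (hstar.star_ne_zero (coeIdeal_map_C_ne_zero hI)) hle hr
  rwa [hstar.idem _ (coeIdeal_map_C_ne_zero hI)] at h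

omit [IsDomain R] [IsFractionRing R[X] L] in
theorem one_mem_star_of_barStar_eq_top (h : barStar star I = ⊤) :
    (1 : L) ∈ star ↑(I.map C) := by
  simpa using mem_barStar.mp ((Ideal.eq_top_iff_one _).mp h)

theorem exists_mem_barStar_of_mem_barStar_iSup (hstar : IsStarOperation R[X] L star)
    (hfc : StarFiniteCharacter R[X] L star) {ι : Type*} [Nonempty ι] {A : ι → Ideal R}
    (hA : Directed (· ≤ ·) A) (hA0 : ⨆ i, A i ≠ ⊥) {r : R} (hr : r ∈ barStar star (⨆ i, A i)) :
    ∃ i, A i ≠ ⊥ ∧ r ∈ barStar star (A i) := by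
  rw [mem_barStar, Ideal.map_iSup] at hr
  have hA0' : ⨆ i, (A i).map C ≠ ⊥ := Ideal.map_iSup C A ▸ map_C_ne_bot hA0
  have hdir : Directed (· ≤ ·) fun i => (A i).map (C : R →+* R[X]) :=
    Directed.mono_comp (g := Ideal.map C) (· ≤ ·) (fun _ _ h => Ideal.map_mono h) hA
  obtain ⟨i, hi0, hi⟩ := hstar.exists_mem_star_of_mem_star_iSup hfc hdir hA0' hr
  exact ⟨i, fun h => hi0 (by rw [h, Ideal.map_bot]), hi⟩

theorem mem_barStar_of_span_singleton_mul_le (hstar : IsStarOperation R[X] L star) {b : R}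
    (hI : I ≠ ⊥) (hItop : barStar star I = ⊤) (hbI : Ideal.span {b} * I ≤ J) :
    b ∈ barStar star J := by
  rcases eq_or_ne b 0 with rfl | hb
  · exact zero_mem _
  have hbI0 : Ideal.span {b} * I ≠ ⊥ := mul_ne_zero (Ideal.span_singleton_eq_bot.not.mpr hb) hI
  have hbL : algebraMap R[X] L (C b) ≠ 0 := by
    rwa [Ne, IsFractionRing.to_map_eq_zero_iff, C_eq_zero]
  have hmul : (((Ideal.span {b} * I).map C : Ideal R[X]) : FractionalIdeal R[X]⁰ L) =
      FractionalIdeal.spanSingleton _ (algebraMap R[X] L (C b)) *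
        ((I.map C : Ideal R[X]) : FractionalIdeal R[X]⁰ L) := by
    rw [Ideal.map_mul, Ideal.map_span, Set.image_singleton, FractionalIdeal.coeIdeal_mul,
      FractionalIdeal.coeIdeal_span_singleton]
  have hbmem : algebraMap R[X] L (C b) ∈ star ↑((Ideal.span {b} * I).map C) := by
    rw [hmul, hstar.smul_eq _ hbL _ (coeIdeal_map_C_ne_zero hI)]
    simpa using FractionalIdeal.mul_mem_mul (FractionalIdeal.mem_spanSingleton_self _ _)
      (one_mem_star_of_barStar_eq_top hItop)
  exact barStar_mono hstar hbI0 hbI hbmem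

theorem barStar_sSup_eq_of_directedOn (hstar : IsStarOperation R[X] L star)
    (hfc : StarFiniteCharacter R[X] L star) {c : Set (Ideal R)} (hne : c.Nonempty)
    (hc : DirectedOn (· ≤ ·) c) (hc0 : sSup c ≠ ⊥) (hbar : ∀ I ∈ c, barStar star I = I) :
    barStar star (sSup c) = sSup c := by
  refine le_antisymm (fun r hr => ?_) (le_barStar hstar hc0)
  have : Nonempty c := hne.to_subtype
  rw [sSup_eq_iSup'] at hr hc0 ⊢
  obtain ⟨I, -, hrI⟩ := exists_mem_barStar_of_mem_barStar_iSup hstar hfc hc.directed_val hc0 hr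
  exact le_iSup (fun I : c => (I : Ideal R)) I (by rwa [← hbar I I.2])

theorem exists_barStar_coeffIdeal_eq_top (hstar : IsStarOperation R[X] L star)
    (hfc : StarFiniteCharacter R[X] L star) {Q : Ideal R[X]} (hQ : Q ≠ ⊥)
    (h : barStar star (contentIdeal Q) = ⊤) :
    ∃ g ∈ Q, g ≠ 0 ∧ barStar star (coeffIdeal g) = ⊤ := by
  have hc0 := contentIdeal_ne_bot hQ
  rw [contentIdeal_eq_iSup_coeffIdeal] at hc0
  rw [contentIdeal_eq_iSup_coeffIdeal, Ideal.eq_top_iff_one] at h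
  obtain ⟨⟨g, hgQ⟩, hg0, hg⟩ :=
    exists_mem_barStar_of_mem_barStar_iSup hstar hfc (directed_coeffIdeal Q) hc0 h
  exact ⟨g, hgQ, coeffIdeal_eq_bot_iff.not.mp hg0, (Ideal.eq_top_iff_one _).mpr hg⟩

end BarStar

section BarStarSet

variable {star : FractionalIdeal R[X]⁰ L → FractionalIdeal R[X]⁰ L} {ι : K →+* L}
  {I : Ideal R}

theorem mem_range_algebraMap_of_mem_one
    (hι : ∀ r : R, ι (algebraMap R K r) = algebraMap R[X] L (C r)) {x : K}
    (hx : ι x ∈ (1 : FractionalIdeal R[X]⁰ L)) : x ∈ Set.range (algebraMap R K) := by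
  obtain ⟨f, hf⟩ := (FractionalIdeal.mem_one_iff _).mp hx
  obtain ⟨⟨a, b⟩, hab⟩ := IsLocalization.surj R⁰ x
  have hfb : f * C (b : R) = C a := IsFractionRing.injective R[X] L <| by
    rw [map_mul, hf, ← hι, ← hι, ← map_mul, hab]
  -- the constant coefficient of `f * C b = C a` already gives `x = f₀`
  have hf0 : f.coeff 0 * b = a := by simpa using congrArg (coeff · 0) hfb
  refine ⟨f.coeff 0,
    mul_right_cancel₀ (IsFractionRing.to_map_ne_zero_of_mem_nonZeroDivisors b.2) ?_⟩
  rw [← map_mul, hf0, hab]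

theorem barStarSet_eq_image_barStar (hstar : IsStarOperation R[X] L star)
    (hι : ∀ r : R, ι (algebraMap R K r) = algebraMap R[X] L (C r)) (hI : I ≠ ⊥) :
    barStarSet star ι I = algebraMap R K '' barStar star I := by
  ext x
  constructor
  · intro hx
    have hx1 := hstar.star_coeIdeal_le_one (map_C_ne_bot hI) hx
    obtain ⟨r, rfl⟩ := mem_range_algebraMap_of_mem_one hι hx1
    exact ⟨r, by rwa [SetLike.mem_coe, mem_barStar, ← hι], rfl⟩
  · rintro ⟨r, hr, rfl⟩
    rwa [barStarSet, Set.mem_ofPred_eq, hι]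

theorem barStarSet_eq_range_iff (hstar : IsStarOperation R[X] L star)
    (hι : ∀ r : R, ι (algebraMap R K r) = algebraMap R[X] L (C r)) (hI : I ≠ ⊥) :
    barStarSet star ι I = Set.range (algebraMap R K) ↔ barStar star I = ⊤ := by
  rw [barStarSet_eq_image_barStar hstar hι hI, ← Set.image_univ,
    (IsFractionRing.injective R K).image_injective.eq_iff, Submodule.coe_eq_univ]

theorem barStarSet_eq_image_iff (hstar : IsStarOperation R[X] L star)
    (hι : ∀ r : R, ι (algebraMap R K r) = algebraMap R[X] L (C r)) (hI : I ≠ ⊥) :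
    barStarSet star ι I = algebraMap R K '' I ↔ barStar star I = I := by
  rw [barStarSet_eq_image_barStar hstar hι hI,
    (IsFractionRing.injective R K).image_injective.eq_iff, SetLike.coe_set_eq]

theorem IsBarStarMaximal.isPrime (hstar : IsStarOperation R[X] L star)
    (hι : ∀ r : R, ι (algebraMap R K r) = algebraMap R[X] L (C r)) {M : Ideal R}
    (hM : IsBarStarMaximal star ι M) : M.IsPrime := by
  obtain ⟨hM0, hMtop, hMbar, hMmax⟩ := hM
  refine ⟨hMtop, fun {a b} hab => or_iff_not_imp_left.mpr fun ha => ?_⟩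
  set N := M ⊔ Ideal.span {a}
  have hN0 : N ≠ ⊥ := ne_bot_of_le_ne_bot hM0 le_sup_left
  have hNN := le_barStar hstar hN0
  -- `N^{\bar *}` is a `\bar *`-ideal strictly above `M`, so maximality forces it to be `R`
  have hNtop : barStar star N = ⊤ := by
    by_contra hne
    have hMN := hMmax _ (ne_bot_of_le_ne_bot hN0 hNN) hne
      ((barStarSet_eq_image_iff hstar hι (ne_bot_of_le_ne_bot hN0 hNN)).mpr
        (barStar_barStar hstar hN0)) (le_sup_left.trans hNN)
    exact ha (hMN ▸ hNN (Ideal.mem_sup_right (Ideal.mem_span_singleton_self a)))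
  have hbN : Ideal.span {b} * N ≤ M := by
    rw [Ideal.mul_sup, Ideal.span_singleton_mul_span_singleton, mul_comm b a]
    exact sup_le Ideal.mul_le_right ((Ideal.span_singleton_le_iff_mem M).mpr hab)
  rw [← (barStarSet_eq_image_iff hstar hι hM0).mp hMbar]
  exact mem_barStar_of_span_singleton_mul_le hstar hN0 hNtop hbN

theorem exists_isBarStarMaximal_le (hstar : IsStarOperation R[X] L star)
    (hfc : StarFiniteCharacter R[X] L star)
    (hι : ∀ r : R, ι (algebraMap R K r) = algebraMap R[X] L (C r)) {J : Ideal R} (hJ : J ≠ ⊥)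
    (hJtop : barStar star J ≠ ⊤) : ∃ M, IsBarStarMaximal star ι M ∧ J ≤ M := by
  let s := {I : Ideal R | J ≤ I ∧ I ≠ ⊤ ∧ barStar star I = I}
  have hchain : ∀ c ⊆ s, IsChain (· ≤ ·) c → ∀ I ∈ c, ∃ ub ∈ s, ∀ N ∈ c, N ≤ ub := by
    intro c hcs hc I hI
    have hJc : J ≤ sSup c := (hcs hI).1.trans (le_sSup hI)
    have hctop : sSup c ≠ ⊤ := (CompleteLattice.IsCompactElement.directed_sSup_lt_of_lt
      Ideal.isCompactElement_top ⟨I, hI⟩ hc.directedOn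
      fun N hN => lt_top_iff_ne_top.mpr (hcs hN).2.1).ne
    exact ⟨sSup c, ⟨hJc, hctop, barStar_sSup_eq_of_directedOn hstar hfc ⟨I, hI⟩ hc.directedOn
      (ne_bot_of_le_ne_bot hJ hJc) fun N hN => (hcs hN).2.2⟩, fun _ => le_sSup⟩
  obtain ⟨M, -, ⟨hJM, hMtop, hMbar⟩, hMmax⟩ := zorn_le_nonempty₀ s hchain (barStar star J)
    ⟨le_barStar hstar hJ, hJtop, barStar_barStar hstar hJ⟩
  have hM0 := ne_bot_of_le_ne_bot hJ hJM
  refine ⟨M, ⟨hM0, hMtop, (barStarSet_eq_image_iff hstar hι hM0).mpr hMbar, ?_⟩, hJM⟩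
  intro N hN0 hNtop hNbar hMN
  exact le_antisymm hMN
    (hMmax ⟨hJM.trans hMN, hNtop, (barStarSet_eq_image_iff hstar hι hN0).mp hNbar⟩ hMN)

end BarStarSet

theorem statement6
    (star : FractionalIdeal (nonZeroDivisors R[X]) L → FractionalIdeal (nonZeroDivisors R[X]) L)
    (hstar : IsStarOperation R[X] L star) (hfc : StarFiniteCharacter R[X] L star)
    (ι : K →+* L) (hι : ∀ r : R, ι (algebraMap R K r) = algebraMap R[X] L (C r)) :
    List.TFAE
      [∀ Q : Ideal R[X], IsUpperToZero Q →
          barStarSet star ι (contentIdeal Q) = Set.range (algebraMap R K),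
       ∀ Q : Ideal R[X], IsUpperToZero Q →
          ∃ g ∈ Q, g ≠ 0 ∧ barStarSet star ι (coeffIdeal g) = Set.range (algebraMap R K),
       ∀ Q : Ideal R[X], IsUpperToZero Q → ∀ p : Ideal R, IsBarStarPrime star ι p →
          ¬ Q ≤ p.map (C : R →+* R[X]),
       ∀ Q : Ideal R[X], IsUpperToZero Q → ∀ M : Ideal R, IsBarStarMaximal star ι M →
          ¬ Q ≤ M.map (C : R →+* R[X])] := by
  tfae_have 1 → 2 := fun h Q hQ => by
    have hc0 := contentIdeal_ne_bot hQ.2.1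
    obtain ⟨g, hgQ, hg0, hg⟩ := exists_barStar_coeffIdeal_eq_top hstar hfc hQ.2.1
      ((barStarSet_eq_range_iff hstar hι hc0).mp (h Q hQ))
    exact ⟨g, hgQ, hg0, (barStarSet_eq_range_iff hstar hι (coeffIdeal_ne_bot hg0)).mpr hg⟩
  tfae_have 2 → 3 := fun h Q hQ p ⟨hp0, hp, hpbar⟩ hQp => by
    obtain ⟨g, hgQ, hg0, hg⟩ := h Q hQ
    refine hp.ne_top (top_le_iff.mp ?_)
    calc ⊤ = barStar star (coeffIdeal g) :=
          ((barStarSet_eq_range_iff hstar hι (coeffIdeal_ne_bot hg0)).mp hg).symm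
      _ ≤ barStar star p :=
          barStar_mono hstar (coeffIdeal_ne_bot hg0) (coeffIdeal_le_iff.mpr (hQp hgQ))
      _ = p := (barStarSet_eq_image_iff hstar hι hp0).mp hpbar
  tfae_have 3 → 4 := fun h Q hQ M hM => h Q hQ M ⟨hM.1, hM.isPrime hstar hι, hM.2.2.1⟩
  tfae_have 4 → 1 := fun h Q hQ => by
    have hc0 := contentIdeal_ne_bot hQ.2.1
    rw [barStarSet_eq_range_iff hstar hι hc0]
    by_contra hne
    obtain ⟨M, hM, hcM⟩ := exists_isBarStarMaximal_le hstar hfc hι hc0 hne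
    exact h Q hQ M hM ((le_map_C_contentIdeal Q).trans (Ideal.map_mono hcM))
  tfae_finish
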